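/- arXiv:1209.5691 — 3 statements merged into one kernel-verified Lean document; each statement's English description precedes it below -/
import Mathlib

section
/- If X is an (r1,r2)-homogeneously dense metric space and f : X → Y is η-quasisymmetric onto its image, then f(X) is (μ1,μ2)-homogeneously dense for some constants 0 < μ1 ≤ μ2 < 1 depending only on η, r1, r2. -/
open Set Function

universe u v

/-! Iterating the homogeneous density of `X` a fixed number `n` of times produces, for any
`a ≠ b`, a point `x` with `r₁ⁿ d(a,b) ≤ d(a,x) ≤ r₂ⁿ d(a,b)`. Quasisymmetry at the base point `a`
turns these two ratio bounds into `d(f a, f x) ≤ η(r₂ⁿ) d(f a, f b)` and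
`d(f a, f b) ≤ η(r₁⁻ⁿ) d(f a, f x)`; choosing `n` with `η(r₂ⁿ) < 1` gives the constants. -/

section HomogeneouslyDense

variable {X : Type*} [PseudoMetricSpace X]

def IsHomogeneouslyDense (r₁ r₂ : ℝ) (s : Set X) : Prop :=
  ∀ a ∈ s, ∀ b ∈ s, ∃ x ∈ s, r₁ * dist a b ≤ dist a x ∧ dist a x ≤ r₂ * dist a b

variable {r₁ r₂ : ℝ} {s : Set X}

theorem IsHomogeneouslyDense.mono_left {r₁' : ℝ} (h : IsHomogeneouslyDense r₁ r₂ s)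
    (hr : r₁' ≤ r₁) : IsHomogeneouslyDense r₁' r₂ s :=
  fun a ha b hb => (h a ha b hb).imp fun _ ⟨hx, h₁, h₂⟩ =>
    ⟨hx, (mul_le_mul_of_nonneg_right hr dist_nonneg).trans h₁, h₂⟩

theorem IsHomogeneouslyDense.pow (h : IsHomogeneouslyDense r₁ r₂ s) (hr₁ : 0 ≤ r₁)
    (hr₂ : 0 ≤ r₂) (n : ℕ) : IsHomogeneouslyDense (r₁ ^ n) (r₂ ^ n) s := by
  induction n with
  | zero => exact fun a _ b hb => ⟨b, hb, by simp⟩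
  | succ n ih =>
    intro a ha b hb
    obtain ⟨x, hx, hx₁, hx₂⟩ := ih a ha b hb
    obtain ⟨y, hy, hy₁, hy₂⟩ := h a ha x hx
    refine ⟨y, hy, ?_, ?_⟩
    · calc r₁ ^ (n + 1) * dist a b = r₁ * (r₁ ^ n * dist a b) := by ring
        _ ≤ r₁ * dist a x := by gcongr
        _ ≤ dist a y := hy₁
    · calc dist a y ≤ r₂ * dist a x := hy₂
        _ ≤ r₂ * (r₂ ^ n * dist a b) := by gcongr
        _ = r₂ ^ (n + 1) * dist a b := by ring

end HomogeneouslyDense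

section Quasisymmetric

variable {X Y : Type*} [MetricSpace X] [MetricSpace Y]

def IsQuasisymmetricWith (η : ℝ → ℝ) (f : X → Y) : Prop :=
  ∀ x a b : X, x ≠ a → x ≠ b → a ≠ b →
    dist (f a) (f x) / dist (f b) (f x) ≤ η (dist a x / dist b x)

variable {η : ℝ → ℝ} {f : X → Y}

theorem IsQuasisymmetricWith.dist_le_mul (hf : IsQuasisymmetricWith η f) (hinj : Injective f)
    (hη : MonotoneOn η (Ici 0)) {x a b : X} (hxa : x ≠ a) (hxb : x ≠ b) (hab : a ≠ b)
    {t : ℝ} (ht : 0 ≤ t) (h : dist a x ≤ t * dist b x) :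
    dist (f a) (f x) ≤ η t * dist (f b) (f x) := by
  have hbx : 0 < dist b x := dist_pos.2 hxb.symm
  have hfbx : 0 < dist (f b) (f x) := dist_pos.2 (hinj.ne hxb.symm)
  rw [← div_le_iff₀ hfbx]
  exact (hf x a b hxa hxb hab).trans
    (hη (div_nonneg dist_nonneg dist_nonneg) ht ((div_le_iff₀ hbx).2 h))

theorem IsQuasisymmetricWith.isHomogeneouslyDense_range (hf : IsQuasisymmetricWith η f)
    (hinj : Injective f) (hη : MonotoneOn η (Ici 0)) {r₁ r₂ : ℝ}
    (hX : IsHomogeneouslyDense r₁ r₂ (univ : Set X)) (hr₁ : 0 < r₁) (hr₂ : r₂ < 1) :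
    IsHomogeneouslyDense (η r₁⁻¹)⁻¹ (η r₂) (range f) := by
  rintro _ ⟨a, rfl⟩ _ ⟨b, rfl⟩
  rcases eq_or_ne a b with rfl | hab
  · exact ⟨f a, mem_range_self a, by simp⟩
  obtain ⟨x, -, hx₁, hx₂⟩ := hX a trivial b trivial
  have hdab : 0 < dist a b := dist_pos.2 hab
  have hxa : x ≠ a := by
    rintro rfl
    exact (mul_pos hr₁ hdab).not_ge (by simpa using hx₁)
  have hxb : x ≠ b := by
    rintro rfl
    exact (mul_lt_of_lt_one_left hdab hr₂).not_ge hx₂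
  have hr₂0 : 0 ≤ r₂ := nonneg_of_mul_nonneg_left (dist_nonneg.trans hx₂) hdab
  have hupper : dist (f x) (f a) ≤ η r₂ * dist (f b) (f a) :=
    hf.dist_le_mul hinj hη hxa.symm hab hxb hr₂0 (by rwa [dist_comm x, dist_comm b])
  have hlower : dist (f b) (f a) ≤ η r₁⁻¹ * dist (f x) (f a) := by
    refine hf.dist_le_mul hinj hη hab hxa.symm hxb.symm (inv_nonneg.2 hr₁.le) ?_
    rw [dist_comm b, dist_comm x, inv_mul_eq_div, le_div_iff₀ hr₁, mul_comm]
    exact hx₁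
  have hfab : 0 < dist (f b) (f a) := dist_pos.2 (hinj.ne hab.symm)
  refine ⟨f x, mem_range_self x, ?_, ?_⟩
  · rw [dist_comm (f a), dist_comm (f a)]
    exact inv_mul_le_of_le_mul₀ (nonneg_of_mul_nonneg_left (hfab.le.trans hlower)
      (dist_pos.2 (hinj.ne hxa))) dist_nonneg hlower
  · rwa [dist_comm (f a), dist_comm (f a)]

end Quasisymmetric

theorem qs_image_hd_general (η : ℝ → ℝ) (hη0 : η 0 = 0) (hηmono : StrictMonoOn η (Ici 0))
    (hηsurj : SurjOn η (Ici 0) (Ici 0))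
    (r1 r2 : ℝ) (hr1 : 0 < r1) (hr12 : r1 ≤ r2) (hr2 : r2 < 1) :
    ∃ μ1 μ2 : ℝ, 0 < μ1 ∧ μ1 ≤ μ2 ∧ μ2 < 1 ∧
      ∀ (X : Type u) (Y : Type v) [MetricSpace X] [MetricSpace Y] (f : X → Y),
        Function.Injective f →
        (∀ a b : X, ∃ x : X, r1 * dist a b ≤ dist a x ∧ dist a x ≤ r2 * dist a b) →
        (∀ x a b : X, x ≠ a → x ≠ b → a ≠ b →
          dist (f a) (f x) / dist (f b) (f x) ≤ η (dist a x / dist b x)) →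
        ∀ ya ∈ Set.range f, ∀ yb ∈ Set.range f, ∃ yx ∈ Set.range f,
          μ1 * dist ya yb ≤ dist ya yx ∧ dist ya yx ≤ μ2 * dist ya yb := by
  have hr2pos : 0 < r2 := hr1.trans_le hr12
  have hηpos : ∀ t, 0 < t → 0 < η t := fun t ht => hη0 ▸ hηmono (mem_Ici.2 le_rfl) ht.le ht
  obtain ⟨s, hs0, hs⟩ := hηsurj (mem_Ici.2 zero_le_one)
  have hspos : 0 < s := (mem_Ici.1 hs0).lt_of_ne (by rintro rfl; simp [hη0] at hs)
  obtain ⟨n, hn⟩ := exists_pow_lt_of_lt_one (lt_min hspos one_pos) hr2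
  have hμ2 : η (r2 ^ n) < 1 :=
    hs ▸ hηmono (pow_pos hr2pos n).le hs0 (hn.trans_le (min_le_left _ _))
  refine ⟨min (η (r1 ^ n)⁻¹)⁻¹ (η (r2 ^ n)), η (r2 ^ n),
    lt_min (inv_pos.2 (hηpos _ (by positivity))) (hηpos _ (pow_pos hr2pos n)),
    min_le_right _ _, hμ2, ?_⟩
  intro X Y _ _ f hinj hHD hQS
  have hX : IsHomogeneouslyDense r1 r2 (univ : Set X) :=
    fun a _ b _ => (hHD a b).imp fun x hx => ⟨mem_univ x, hx⟩
  exact ((show IsQuasisymmetricWith η f from hQS).isHomogeneouslyDense_range hinj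
    hηmono.monotoneOn (hX.pow hr1.le hr2pos.le n) (pow_pos hr1 n)
    (hn.trans_le (min_le_right _ _))).mono_left (min_le_left _ _)

/-- The `η`-quasisymmetric image of an `(r1,r2)`-homogeneously dense
metric space is `(μ1,μ2)`-homogeneously dense, with `μ1, μ2` depending only on
`η`, `r1`, `r2`. -/
theorem qs_image_hd (η : ℝ → ℝ) (hη0 : η 0 = 0) (hηmono : StrictMonoOn η (Ici 0))
    (hηcont : ContinuousOn η (Ici 0)) (hηsurj : SurjOn η (Ici 0) (Ici 0))
    (r1 r2 : ℝ) (hr1 : 0 < r1) (hr12 : r1 ≤ r2) (hr2 : r2 < 1) :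
    ∃ μ1 μ2 : ℝ, 0 < μ1 ∧ μ1 ≤ μ2 ∧ μ2 < 1 ∧
      ∀ (X : Type u) (Y : Type v) [MetricSpace X] [MetricSpace Y] (f : X → Y),
        Function.Injective f →
        (∀ a b : X, ∃ x : X, r1 * dist a b ≤ dist a x ∧ dist a x ≤ r2 * dist a b) →
        (∀ x a b : X, x ≠ a → x ≠ b → a ≠ b →
          dist (f a) (f x) / dist (f b) (f x) ≤ η (dist a x / dist b x)) →
        ∀ ya ∈ Set.range f, ∀ yb ∈ Set.range f, ∃ yx ∈ Set.range f,
          μ1 * dist ya yb ≤ dist ya yx ∧ dist ya yx ≤ μ2 * dist ya yb :=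
  qs_image_hd_general η hη0 hηmono hηsurj r1 r2 hr1 hr12 hr2
end

section
/- Every ball B(x0, r) in a Banach space E is a 2-uniform domain: each pair of points z1, z2 ∈ B(x0,r) can be joined by a rectifiable arc α in B(x0,r) with ℓ(α) ≤ 2|z1 − z2| and min_{j=1,2} ℓ(α[z_j, z]) ≤ 2·d(z, ∂B(x0,r)) for all z ∈ α. -/
/-!
Put `z₁ = x₀ + u₁`, `z₂ = x₀ + u₂`. The chord `[z₁, z₂]` may run too close to the sphere, so
it is bent towards the centre: `γ t = x₀ + (1 - t) u₁ + t u₂ - μ t (1 - t) (u₁ + u₂)` with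
`μ = min 1 (2 ‖u₂ - u₁‖ / ‖u₁ + u₂‖)`. Its speed is at most `‖u₂ - u₁‖ + μ ‖u₁ + u₂‖ |2t - 1|`,
so its length is at most `2 ‖u₂ - u₁‖`. Writing `γ t - x₀` as a combination of `u₁` and `u₂`
with nonnegative weights of sum at most `1` bounds the depth `r - ‖γ s - x₀‖` from below, and
for `s ≤ 1/2` this bound dominates half the length of `γ` on `[0, s]`; the case `s ≥ 1/2`
follows from the symmetry `t ↦ 1 - t`, `u₁ ↔ u₂`.
-/

open Metric Set intervalIntegral

section

variable {E : Type*} [NormedAddCommGroup E]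

theorem intervalIntegral_norm_le_of_le_affine {g : ℝ → E} (hg : Continuous g) {s p q : ℝ}
    (hs : 0 ≤ s) (h : ∀ t ∈ Icc 0 s, ‖g t‖ ≤ p + q * t) :
    ∫ t in 0..s, ‖g t‖ ≤ p * s + q * s ^ 2 / 2 := by
  calc ∫ t in 0..s, ‖g t‖ ≤ ∫ t in 0..s, (p + q * t) :=
        integral_mono_on hs (hg.norm.intervalIntegrable _ _)
          ((continuous_const.add (continuous_const.mul continuous_id)).intervalIntegrable _ _) h
    _ = p * s + q * s ^ 2 / 2 := by
        rw [integral_add (f := fun _ => p) (g := fun t => q * t) intervalIntegrable_const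
          ((continuous_const.mul continuous_id).intervalIntegrable _ _),
          integral_const, integral_const_mul, integral_id]
        simp only [sub_zero, smul_eq_mul]
        ring

-- `μ = min 1 (2 ‖u2 - u1‖ / ‖u1 + u2‖)`, stated without dividing by `‖u1 + u2‖`, which may vanish
structure IsBendParam (u1 u2 : E) (μ : ℝ) : Prop where
  nonneg : 0 ≤ μ
  le_one : μ ≤ 1
  mul_le : μ * ‖u1 + u2‖ ≤ 2 * ‖u2 - u1‖
  eq_one_or : μ = 1 ∨ μ * ‖u1 + u2‖ = 2 * ‖u2 - u1‖

theorem IsBendParam.symm {u1 u2 : E} {μ : ℝ} (h : IsBendParam u1 u2 μ) :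
    IsBendParam u2 u1 μ := by
  obtain ⟨h0, h1, h2, h3⟩ := h
  rw [add_comm, norm_sub_rev] at h2 h3
  exact ⟨h0, h1, h2, h3⟩

theorem exists_isBendParam (u1 u2 : E) : ∃ μ, IsBendParam u1 u2 μ := by
  rcases le_or_gt ‖u1 + u2‖ (2 * ‖u2 - u1‖) with hσ | hσ
  · exact ⟨1, zero_le_one, le_rfl, by rwa [one_mul], Or.inl rfl⟩
  · have hpos : 0 < ‖u1 + u2‖ := (by positivity : (0:ℝ) ≤ 2 * ‖u2 - u1‖).trans_lt hσ
    refine ⟨2 * ‖u2 - u1‖ / ‖u1 + u2‖, by positivity, (div_le_one hpos).mpr hσ.le, ?_, ?_⟩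
    · rw [div_mul_cancel₀ _ hpos.ne']
    · exact Or.inr (div_mul_cancel₀ _ hpos.ne')

variable [NormedSpace ℝ E]

def IsUniformArc (c : ℝ) (D : Set E) (z1 z2 : E) (γ : ℝ → E) : Prop :=
  ContDiffOn ℝ 1 γ (Icc 0 1) ∧ γ 0 = z1 ∧ γ 1 = z2 ∧
    (∀ t ∈ Icc (0:ℝ) 1, γ t ∈ D) ∧
    (∫ t in (0:ℝ)..1, ‖derivWithin γ (Icc 0 1) t‖) ≤ c * dist z1 z2 ∧
    ∀ s ∈ Icc (0:ℝ) 1,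
      min (∫ t in (0:ℝ)..s, ‖derivWithin γ (Icc 0 1) t‖)
          (∫ t in s..(1:ℝ), ‖derivWithin γ (Icc 0 1) t‖)
        ≤ c * infDist (γ s) (frontier D)

theorem isUniformArc_const {c : ℝ} {D : Set E} {z : E} (hc : 0 ≤ c) (hz : z ∈ D) :
    IsUniformArc c D z z (fun _ => z) := by
  refine ⟨contDiffOn_const, rfl, rfl, fun _ _ => hz, ?_, fun s _ => ?_⟩
  · simp
  · simpa using mul_nonneg hc infDist_nonneg

theorem sub_dist_le_infDist_frontier_ball [Nontrivial E] {x0 z : E} {r : ℝ} (hr : 0 < r) :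
    r - dist z x0 ≤ infDist z (frontier (ball x0 r)) := by
  rw [frontier_ball x0 hr.ne', le_infDist (NormedSpace.sphere_nonempty.mpr hr.le)]
  intro y hy
  linarith [dist_triangle y z x0, mem_sphere.mp hy, dist_comm z y]

def ballArcWeight (μ t : ℝ) : ℝ := (1 - t) * (1 - μ * t)

-- `x0 + (1 - t) • u1 + t • u2 - (μ * t * (1 - t)) • (u1 + u2)`
def ballArc (x0 u1 u2 : E) (μ t : ℝ) : E :=
  x0 + ballArcWeight μ t • u1 + ballArcWeight μ (1 - t) • u2

def ballArcDeriv (u1 u2 : E) (μ t : ℝ) : E := (u2 - u1) + (μ * (2 * t - 1)) • (u1 + u2)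

theorem hasDerivAt_ballArcWeight (μ t : ℝ) :
    HasDerivAt (ballArcWeight μ) (2 * μ * t - 1 - μ) t := by
  have := ((hasDerivAt_id t).const_sub 1).mul (((hasDerivAt_id t).const_mul μ).const_sub 1)
  exact this.congr_deriv (by simp only [id]; ring)

theorem hasDerivAt_ballArc (x0 u1 u2 : E) (μ t : ℝ) :
    HasDerivAt (ballArc x0 u1 u2 μ) (ballArcDeriv u1 u2 μ t) t := by
  have h1 := hasDerivAt_ballArcWeight μ t
  have h2 := (hasDerivAt_ballArcWeight μ (1 - t)).comp t ((hasDerivAt_id t).const_sub 1)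
  refine (((h1.smul_const u1).const_add x0).add (h2.smul_const u2)).congr_deriv ?_
  simp only [ballArcDeriv]
  module

theorem ballArcWeight_nonneg {μ t : ℝ} (hμ : μ ≤ 1) (ht : t ∈ Icc (0:ℝ) 1) :
    0 ≤ ballArcWeight μ t := by
  obtain ⟨ht0, ht1⟩ := ht
  unfold ballArcWeight
  exact mul_nonneg (by linarith) (by nlinarith)

theorem ballArcWeight_add_le_one {μ t : ℝ} (hμ : 0 ≤ μ) (ht : t ∈ Icc (0:ℝ) 1) :
    ballArcWeight μ t + ballArcWeight μ (1 - t) ≤ 1 := by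
  obtain ⟨ht0, ht1⟩ := ht
  have : 0 ≤ μ * (t * (1 - t)) := mul_nonneg hμ (mul_nonneg ht0 (by linarith))
  unfold ballArcWeight
  nlinarith

theorem norm_ballArc_sub_le {x0 u1 u2 : E} {μ t : ℝ} (hμ : μ ≤ 1) (ht : t ∈ Icc (0:ℝ) 1) :
    ‖ballArc x0 u1 u2 μ t - x0‖ ≤
      ballArcWeight μ t * ‖u1‖ + ballArcWeight μ (1 - t) * ‖u2‖ := by
  have ht' : 1 - t ∈ Icc (0:ℝ) 1 := ⟨by linarith [ht.2], by linarith [ht.1]⟩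
  rw [ballArc, add_assoc, add_sub_cancel_left]
  refine (norm_add_le _ _).trans_eq ?_
  rw [norm_smul, norm_smul, Real.norm_of_nonneg (ballArcWeight_nonneg hμ ht),
    Real.norm_of_nonneg (ballArcWeight_nonneg hμ ht')]

theorem ballArc_mem_ball {x0 u1 u2 : E} {μ t r : ℝ} (hμ0 : 0 ≤ μ) (hμ1 : μ ≤ 1)
    (h1 : ‖u1‖ < r) (h2 : ‖u2‖ < r) (ht : t ∈ Icc (0:ℝ) 1) :
    ballArc x0 u1 u2 μ t ∈ ball x0 r := by
  have ht' : 1 - t ∈ Icc (0:ℝ) 1 := ⟨by linarith [ht.2], by linarith [ht.1]⟩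
  have hw1 := ballArcWeight_nonneg hμ1 ht
  have hw2 := ballArcWeight_nonneg hμ1 ht'
  rw [mem_ball_iff_norm]
  calc ‖ballArc x0 u1 u2 μ t - x0‖
      ≤ ballArcWeight μ t * ‖u1‖ + ballArcWeight μ (1 - t) * ‖u2‖ := norm_ballArc_sub_le hμ1 ht
    _ ≤ ballArcWeight μ t * max ‖u1‖ ‖u2‖ + ballArcWeight μ (1 - t) * max ‖u1‖ ‖u2‖ := by
      gcongr
      exacts [le_max_left _ _, le_max_right _ _]
    _ ≤ max ‖u1‖ ‖u2‖ := by
      rw [← add_mul]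
      exact mul_le_of_le_one_left (by positivity) (ballArcWeight_add_le_one hμ0 ht)
    _ < r := max_lt h1 h2

theorem continuous_ballArcDeriv (u1 u2 : E) (μ : ℝ) : Continuous (ballArcDeriv u1 u2 μ) := by
  unfold ballArcDeriv
  fun_prop

theorem norm_ballArcDeriv_le {u1 u2 : E} {μ t : ℝ} (hμ : 0 ≤ μ) (ht : t ≤ 1 / 2) :
    ‖ballArcDeriv u1 u2 μ t‖ ≤ ‖u2 - u1‖ + μ * ‖u1 + u2‖ * (1 - 2 * t) := by
  refine (norm_add_le _ _).trans_eq ?_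
  rw [norm_smul, Real.norm_eq_abs, abs_of_nonpos (mul_nonpos_of_nonneg_of_nonpos hμ (by linarith))]
  ring

theorem norm_ballArcDeriv_one_le {u1 u2 : E} {t : ℝ} (ht : t ∈ Icc (0:ℝ) 1) :
    ‖ballArcDeriv u1 u2 1 t‖ ≤ 2 * (1 - t) * ‖u1‖ + 2 * t * ‖u2‖ := by
  obtain ⟨ht0, ht1⟩ := ht
  have he : ballArcDeriv u1 u2 1 t = (2 * (t - 1)) • u1 + (2 * t) • u2 := by
    simp only [ballArcDeriv]
    module
  rw [he]
  refine (norm_add_le _ _).trans_eq ?_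
  rw [norm_smul, norm_smul, Real.norm_of_nonpos (by linarith), Real.norm_of_nonneg (by linarith)]
  ring

theorem integral_norm_ballArcDeriv_le {u1 u2 : E} {μ s : ℝ} (hμ : 0 ≤ μ)
    (hs : s ∈ Icc (0:ℝ) (1 / 2)) :
    ∫ t in 0..s, ‖ballArcDeriv u1 u2 μ t‖ ≤
      ‖u2 - u1‖ * s + μ * ‖u1 + u2‖ * (s - s ^ 2) := by
  refine (intervalIntegral_norm_le_of_le_affine (continuous_ballArcDeriv u1 u2 μ) hs.1
    (p := ‖u2 - u1‖ + μ * ‖u1 + u2‖) (q := -2 * μ * ‖u1 + u2‖) fun t ht => ?_).trans_eq (by ring)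
  exact (norm_ballArcDeriv_le hμ (ht.2.trans hs.2)).trans_eq (by ring)

theorem integral_norm_ballArcDeriv_one_le {u1 u2 : E} {s : ℝ} (hs : s ∈ Icc (0:ℝ) 1) :
    ∫ t in 0..s, ‖ballArcDeriv u1 u2 1 t‖ ≤ (2 * s - s ^ 2) * ‖u1‖ + s ^ 2 * ‖u2‖ := by
  refine (intervalIntegral_norm_le_of_le_affine (continuous_ballArcDeriv u1 u2 1) hs.1
    (p := 2 * ‖u1‖) (q := 2 * (‖u2‖ - ‖u1‖)) fun t ht => ?_).trans_eq (by ring)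
  exact (norm_ballArcDeriv_one_le ⟨ht.1, ht.2.trans hs.2⟩).trans_eq (by ring)

theorem integral_norm_ballArcDeriv_le_two_mul_depth {u1 u2 : E} {μ r s : ℝ}
    (hμ : IsBendParam u1 u2 μ) (h1 : ‖u1‖ < r) (h2 : ‖u2‖ < r) (hs : s ∈ Icc (0:ℝ) (1 / 2)) :
    ∫ t in 0..s, ‖ballArcDeriv u1 u2 μ t‖ ≤
      2 * (r - (ballArcWeight μ s * ‖u1‖ + ballArcWeight μ (1 - s) * ‖u2‖)) := by
  obtain ⟨hs0, hs1⟩ := hs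
  rcases hμ.eq_one_or with rfl | hμσ
  · refine (integral_norm_ballArcDeriv_one_le ⟨hs0, by linarith⟩).trans ?_
    -- both endpoints lie in the ball, and `4 s ^ 2 ≤ 2 s` on `[0, 1/2]`
    have hp : (2 - 2 * s + s ^ 2) * ‖u1‖ ≤ (2 - 2 * s + s ^ 2) * r := by gcongr; nlinarith
    have hq : 3 * s ^ 2 * ‖u2‖ ≤ 3 * s ^ 2 * r := by gcongr
    have hr : 0 ≤ s * (1 - 2 * s) * r :=
      mul_nonneg (mul_nonneg hs0 (by linarith)) ((norm_nonneg u1).trans h1.le)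
    simp only [ballArcWeight]
    nlinarith
  · refine (integral_norm_ballArcDeriv_le hμ.nonneg ⟨hs0, hs1⟩).trans ?_
    -- bending towards the centre buys depth `μ s (1 - s) (‖u1‖ + ‖u2‖) ≥ 2 ‖u2 - u1‖ s (1 - s)`
    have hbend : μ * ‖u1 + u2‖ * (s * (1 - s)) ≤ μ * (‖u1‖ + ‖u2‖) * (s * (1 - s)) := by
      have := hμ.nonneg
      gcongr
      · nlinarith
      · exact norm_add_le _ _
    have hchord : (1 - s) * ‖u1‖ + s * ‖u2‖ ≤ r := by nlinarith
    have hd : 0 ≤ ‖u2 - u1‖ * s * (1 - 2 * s) :=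
      mul_nonneg (mul_nonneg (norm_nonneg _) hs0) (by linarith)
    simp only [ballArcWeight]
    nlinarith

theorem norm_ballArcDeriv_one_sub (u1 u2 : E) (μ t : ℝ) :
    ‖ballArcDeriv u1 u2 μ (1 - t)‖ = ‖ballArcDeriv u2 u1 μ t‖ := by
  rw [← norm_neg]
  congr 1
  simp only [ballArcDeriv]
  module

theorem integral_norm_ballArcDeriv_symm (u1 u2 : E) (μ s : ℝ) :
    ∫ t in s..1, ‖ballArcDeriv u1 u2 μ t‖ = ∫ t in 0..(1 - s), ‖ballArcDeriv u2 u1 μ t‖ := by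
  simp only [← norm_ballArcDeriv_one_sub u1 u2 μ, integral_comp_sub_left
    (fun t => ‖ballArcDeriv u1 u2 μ t‖), sub_sub_cancel, sub_zero]

theorem integral_norm_derivWithin_ballArc (x0 u1 u2 : E) (μ : ℝ) {a b : ℝ}
    (ha : a ∈ Icc (0:ℝ) 1) (hb : b ∈ Icc (0:ℝ) 1) :
    ∫ t in a..b, ‖derivWithin (ballArc x0 u1 u2 μ) (Icc 0 1) t‖ =
      ∫ t in a..b, ‖ballArcDeriv u1 u2 μ t‖ :=
  integral_congr fun t ht => by
    rw [(hasDerivAt_ballArc x0 u1 u2 μ t).hasDerivWithinAt.derivWithin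
      (uniqueDiffOn_Icc zero_lt_one t (uIcc_subset_Icc ha hb ht))]

theorem isUniformArc_ballArc [Nontrivial E] {x0 u1 u2 : E} {μ r : ℝ} (hμ : IsBendParam u1 u2 μ)
    (h1 : ‖u1‖ < r) (h2 : ‖u2‖ < r) :
    IsUniformArc 2 (ball x0 r) (x0 + u1) (x0 + u2) (ballArc x0 u1 u2 μ) := by
  have h0 : (0:ℝ) ∈ Icc (0:ℝ) 1 := left_mem_Icc.2 zero_le_one
  have h1' : (1:ℝ) ∈ Icc (0:ℝ) 1 := right_mem_Icc.2 zero_le_one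
  refine ⟨?_, by simp [ballArc, ballArcWeight], by simp [ballArc, ballArcWeight],
    fun t ht => ballArc_mem_ball hμ.nonneg hμ.le_one h1 h2 ht, ?_, fun s hs => ?_⟩
  · exact (show ContDiff ℝ 1 (ballArc x0 u1 u2 μ) by
      unfold ballArc ballArcWeight; fun_prop).contDiffOn
  · have hint (a b : ℝ) :
        IntervalIntegrable (fun t => ‖ballArcDeriv u1 u2 μ t‖) MeasureTheory.volume a b :=
      (continuous_ballArcDeriv u1 u2 μ).norm.intervalIntegrable a b
    have hhalf : (1 / 2 : ℝ) ∈ Icc (0:ℝ) (1 / 2) := right_mem_Icc.2 (by norm_num)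
    have hleft := integral_norm_ballArcDeriv_le hμ.nonneg hhalf (u1 := u1) (u2 := u2)
    have hright := integral_norm_ballArcDeriv_le hμ.nonneg hhalf (u1 := u2) (u2 := u1)
    rw [integral_norm_derivWithin_ballArc _ _ _ _ h0 h1',
      ← integral_add_adjacent_intervals (hint 0 (1 / 2)) (hint (1 / 2) 1),
      integral_norm_ballArcDeriv_symm, dist_eq_norm, add_sub_add_left_eq_sub, norm_sub_rev]
    rw [add_comm u2, norm_sub_rev u1] at hright
    norm_num at hleft hright ⊢
    linarith [hμ.mul_le]
  · have hdepth : 2 * (r - (ballArcWeight μ s * ‖u1‖ + ballArcWeight μ (1 - s) * ‖u2‖)) ≤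
        2 * infDist (ballArc x0 u1 u2 μ s) (frontier (ball x0 r)) := by
      have hr : 0 < r := (norm_nonneg u1).trans_lt h1
      have := sub_dist_le_infDist_frontier_ball (z := ballArc x0 u1 u2 μ s) (x0 := x0) hr
      rw [dist_eq_norm] at this
      linarith [norm_ballArc_sub_le (x0 := x0) (u1 := u1) (u2 := u2) hμ.le_one hs]
    rw [integral_norm_derivWithin_ballArc _ _ _ _ h0 hs,
      integral_norm_derivWithin_ballArc _ _ _ _ hs h1']
    rcases le_total s (1 / 2) with hs2 | hs2
    · exact (min_le_left _ _).trans
        ((integral_norm_ballArcDeriv_le_two_mul_depth hμ h1 h2 ⟨hs.1, hs2⟩).trans hdepth)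
    · refine (min_le_right _ _).trans ?_
      rw [integral_norm_ballArcDeriv_symm]
      refine (integral_norm_ballArcDeriv_le_two_mul_depth hμ.symm h2 h1
        ⟨by linarith [hs.2], by linarith⟩).trans (le_of_eq_of_le ?_ hdepth)
      rw [sub_sub_cancel, add_comm]

end

theorem ball_two_uniform_general {E : Type*} [NormedAddCommGroup E] [NormedSpace ℝ E]
    (x0 : E) (r : ℝ) :
    ∀ z1 ∈ ball x0 r, ∀ z2 ∈ ball x0 r, ∃ γ : ℝ → E,
      ContDiffOn ℝ 1 γ (Icc 0 1) ∧ γ 0 = z1 ∧ γ 1 = z2 ∧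
      (∀ t ∈ Icc (0:ℝ) 1, γ t ∈ ball x0 r) ∧
      (∫ t in (0:ℝ)..1, ‖derivWithin γ (Icc 0 1) t‖) ≤ 2 * dist z1 z2 ∧
      ∀ s ∈ Icc (0:ℝ) 1,
        min (∫ t in (0:ℝ)..s, ‖derivWithin γ (Icc 0 1) t‖)
            (∫ t in s..(1:ℝ), ‖derivWithin γ (Icc 0 1) t‖)
          ≤ 2 * infDist (γ s) (frontier (ball x0 r)) := by
  intro z1 hz1 z2 hz2
  rcases eq_or_ne z1 z2 with rfl | hne
  · exact ⟨fun _ => z1, isUniformArc_const zero_le_two hz1⟩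
  · have : Nontrivial E := ⟨⟨z1, z2, hne⟩⟩
    obtain ⟨μ, hμ⟩ := exists_isBendParam (z1 - x0) (z2 - x0)
    have h := isUniformArc_ballArc (x0 := x0) hμ (mem_ball_iff_norm.mp hz1)
      (mem_ball_iff_norm.mp hz2)
    rw [add_sub_cancel, add_sub_cancel] at h
    exact ⟨_, h⟩

/-- Every ball in a Banach space is a `2`-uniform domain: any two points
can be joined by a rectifiable arc in the ball of length at most `2|z1-z2|` such that for
every point `z` on the arc, the shorter subarc to an endpoint has length at most
`2·dist(z, ∂B)`. -/
theorem ball_two_uniform {E : Type*} [NormedAddCommGroup E] [NormedSpace ℝ E]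
    [CompleteSpace E] (hdim : 2 ≤ Module.rank ℝ E) (x0 : E) (r : ℝ) (hr : 0 < r) :
    ∀ z1 ∈ ball x0 r, ∀ z2 ∈ ball x0 r, ∃ γ : ℝ → E,
      ContDiffOn ℝ 1 γ (Icc 0 1) ∧ γ 0 = z1 ∧ γ 1 = z2 ∧
      (∀ t ∈ Icc (0:ℝ) 1, γ t ∈ ball x0 r) ∧
      (∫ t in (0:ℝ)..1, ‖derivWithin γ (Icc 0 1) t‖) ≤ 2 * dist z1 z2 ∧
      ∀ s ∈ Icc (0:ℝ) 1,
        min (∫ t in (0:ℝ)..s, ‖derivWithin γ (Icc 0 1) t‖)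
            (∫ t in s..(1:ℝ), ‖derivWithin γ (Icc 0 1) t‖)
          ≤ 2 * infDist (γ s) (frontier (ball x0 r)) :=
  ball_two_uniform_general x0 r
end

section
/- Let D ⊊ E, D' ⊊ E' be domains in Banach spaces, f : D → D' a homeomorphism with k_{D'}(f(x),f(y)) ≤ M·k_D(x,y) for all x,y ∈ D (M-quasihyperbolic upper bound), and suppose there is M1 ≥ 1 with d_{D'}(f(z)) ≤ M1·d_D(z) for all z ∈ D. Then for all z1, z2 ∈ D with |z1 − z2| ≤ d_D(z1)/(2M), one has |f(z1) − f(z2)| ≤ 4M·M1·|z1 − z2|. -/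
open Metric Set

variable {E : Type*} [NormedAddCommGroup E] [NormedSpace ℝ E] [CompleteSpace E]

/-- Distance from a point to the boundary of `D`. -/
noncomputable def distBd (D : Set E) (z : E) : ℝ := infDist z (frontier D)

/-- A (C¹, hence rectifiable) path in `D` from `x` to `y`, parametrized on `[0,1]`. -/
def IsQHPath (D : Set E) (x y : E) (γ : ℝ → E) : Prop :=
  ContDiffOn ℝ 1 γ (Icc 0 1) ∧ γ 0 = x ∧ γ 1 = y ∧ ∀ t ∈ Icc (0:ℝ) 1, γ t ∈ D

/-- Quasihyperbolic length of a path: ∫ |dz|/d_D(z). -/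
noncomputable def qhLength (D : Set E) (γ : ℝ → E) : ℝ :=
  ∫ t in (0:ℝ)..1, ‖derivWithin γ (Icc 0 1) t‖ / distBd D (γ t)

/-- The quasihyperbolic distance: infimum of quasihyperbolic lengths of paths in `D`. -/
noncomputable def qhDist (D : Set E) (x y : E) : ℝ :=
  sInf {l | ∃ γ : ℝ → E, IsQHPath D x y γ ∧ qhLength D γ = l}

/-- The distance ratio metric `j_D`. -/
noncomputable def jDist (D : Set E) (x y : E) : ℝ :=
  Real.log (1 + dist x y / min (distBd D x) (distBd D y))

/-!
Joining `z₁` to `z₂` by a segment, which stays at distance at least `d_D(z₁)/2` from `∂D`, gives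
`k_D(z₁, z₂) ≤ 2|z₁ - z₂|/d_D(z₁)`, hence `k_{D'}(f z₁, f z₂) ≤ 2M|z₁ - z₂|/d_D(z₁) ≤ 1`.
Conversely, along a path `γ` starting at `x` one has `d_D(γ t) ≤ d_D(x) + s(t)`, `s` the arc length,
and integrating `ds/(d_D(x) + s)` gives `k_D(x, y) ≥ log (1 + |x - y|/d_D(x))`; since `e^k ≤ 1 + 2k`
for `k ≤ 1`, this yields `|x - y| ≤ 2 k_D(x, y) d_D(x)`. Applied in `D'` together with
`d_{D'}(f z₁) ≤ M₁ d_D(z₁)` this is the claim.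

As `qhDist` is an `sInf`, which is `0` on the empty set, the lower bound needs some `C¹` path to
exist; in an open connected set one is obtained by chaining smoothly reparametrized segments.
-/

open Topology

theorem IsPreconnected.inter_frontier_nonempty {X : Type*} [TopologicalSpace X] {s t : Set X}
    (hs : IsPreconnected s) (hst : (s ∩ t).Nonempty) (hst' : (s \ t).Nonempty) :
    (s ∩ frontier t).Nonempty := by
  by_contra h
  have hcover : s ⊆ interior t ∪ (closure t)ᶜ := fun x hx => by
    by_cases hc : x ∈ closure t
    · exact Or.inl (by_contra fun hi => h ⟨x, hx, hc, hi⟩)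
    · exact Or.inr hc
  obtain ⟨x, hxs, hxt⟩ := hst
  have hsub : s ⊆ interior t :=
    hs.subset_left_of_subset_union isOpen_interior isClosed_closure.isOpen_compl
      (disjoint_compl_right.mono_left interior_subset_closure) hcover
      ⟨x, hxs, (hcover hxs).resolve_right (not_not.2 (subset_closure hxt))⟩
  obtain ⟨y, hys, hyt⟩ := hst'
  exact hyt (interior_subset (hsub hys))

theorem hasDerivWithinAt_Ici_integral_of_continuousOn {g : ℝ → ℝ} {a b t : ℝ}
    (hg : ContinuousOn g (Icc a b)) (ht : t ∈ Ico a b) :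
    HasDerivWithinAt (fun u => ∫ v in a..u, g v) (g t) (Ici t) t := by
  have hIcc : Icc a b ∈ 𝓝[>] t := Icc_mem_nhdsGT_of_mem ht
  exact intervalIntegral.integral_hasDerivWithinAt_right
    ((hg.mono (Icc_subset_Icc le_rfl ht.2.le)).intervalIntegrable_of_Icc ht.1)
    ⟨Icc a b, hIcc, hg.aestronglyMeasurable measurableSet_Icc⟩
    ((hg t (Ico_subset_Icc_self ht)).mono_of_mem_nhdsWithin hIcc)

theorem continuousOn_Icc_integral_of_continuousOn {g : ℝ → ℝ} {a b : ℝ} (hab : a ≤ b)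
    (hg : ContinuousOn g (Icc a b)) :
    ContinuousOn (fun u => ∫ v in a..u, g v) (Icc a b) := by
  rw [← uIcc_of_le hab] at hg ⊢
  exact intervalIntegral.continuousOn_primitive_interval (hg.integrableOn_compact isCompact_uIcc)

theorem norm_sub_le_integral_norm_derivWithin {F : Type*} [NormedAddCommGroup F]
    [NormedSpace ℝ F] {γ : ℝ → F} {a b : ℝ} (hab : a ≤ b) (hγ : ContDiffOn ℝ 1 γ (Icc a b))
    {t : ℝ} (ht : t ∈ Icc a b) :
    ‖γ t - γ a‖ ≤ ∫ u in a..t, ‖derivWithin γ (Icc a b) u‖ := by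
  rcases hab.eq_or_lt with rfl | hab
  · obtain rfl : t = a := le_antisymm ht.2 ht.1
    simp
  have hγ' : ContinuousOn (fun u => ‖derivWithin γ (Icc a b) u‖) (Icc a b) :=
    (hγ.continuousOn_derivWithin (uniqueDiffOn_Icc hab) le_rfl).norm
  refine image_norm_le_of_norm_deriv_right_le_deriv_boundary'
    (f := fun u => γ u - γ a) (hγ.continuousOn.sub continuousOn_const) (fun u hu => ?_)
    (by simp) (continuousOn_Icc_integral_of_continuousOn hab.le hγ')
    (fun u hu => hasDerivWithinAt_Ici_integral_of_continuousOn hγ' hu) (fun _ _ => le_rfl) ht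
  have hγu := (hγ.differentiableOn one_ne_zero u (Ico_subset_Icc_self hu)).hasDerivWithinAt
  exact (hγu.mono_of_mem_nhdsWithin (Icc_mem_nhdsGE_of_mem hu)).sub_const (γ a)

theorem log_add_integral_sub_log_le_integral_div {g h : ℝ → ℝ} {a b d₀ : ℝ} (hab : a ≤ b)
    (hd₀ : 0 < d₀) (hg : ContinuousOn g (Icc a b)) (hg₀ : ∀ t ∈ Icc a b, 0 ≤ g t)
    (hh : ContinuousOn h (Icc a b)) (hh₀ : ∀ t ∈ Icc a b, 0 < h t)
    (hle : ∀ t ∈ Icc a b, h t ≤ d₀ + ∫ u in a..t, g u) :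
    Real.log (d₀ + ∫ u in a..b, g u) - Real.log d₀ ≤ ∫ u in a..b, g u / h u := by
  have hpos : ∀ t ∈ Icc a b, 0 < d₀ + ∫ u in a..t, g u := fun t ht =>
    add_pos_of_pos_of_nonneg hd₀
      (intervalIntegral.integral_nonneg ht.1 fun u hu => hg₀ u ⟨hu.1, hu.2.trans ht.2⟩)
  have hgh : ContinuousOn (fun u => g u / h u) (Icc a b) := hg.div hh fun t ht => (hh₀ t ht).ne'
  -- the right derivative `g / (d₀ + ∫ g)` of `log (d₀ + ∫ g)` is at most `g / h`
  have key : Real.log (d₀ + ∫ u in a..b, g u) ≤ Real.log d₀ + ∫ u in a..b, g u / h u :=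
    image_le_of_deriv_right_le_deriv_boundary
      ((continuousOn_const.add (continuousOn_Icc_integral_of_continuousOn hab hg)).log
        fun t ht => (hpos t ht).ne')
      (fun t ht => ((hasDerivWithinAt_Ici_integral_of_continuousOn hg ht).const_add d₀).log
        (hpos t (Ico_subset_Icc_self ht)).ne')
      (B := fun t => Real.log d₀ + ∫ u in a..t, g u / h u) (by simp)
      (continuousOn_const.add (continuousOn_Icc_integral_of_continuousOn hab hgh))
      (fun t ht => (hasDerivWithinAt_Ici_integral_of_continuousOn hgh ht).const_add _)
      (fun t ht => div_le_div_of_nonneg_left (hg₀ t (Ico_subset_Icc_self ht))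
        (hh₀ t (Ico_subset_Icc_self ht)) (hle t (Ico_subset_Icc_self ht)))
      (right_mem_Icc.2 hab)
  linarith

theorem exp_le_one_add_two_mul {c : ℝ} (h₀ : 0 ≤ c) (h₁ : c ≤ 1) : Real.exp c ≤ 1 + 2 * c := by
  have hconv := convexOn_exp.2 (mem_univ 0) (mem_univ 1) (sub_nonneg.2 h₁) h₀ (sub_add_cancel 1 c)
  simp only [smul_eq_mul, mul_zero, mul_one, zero_add, Real.exp_zero] at hconv
  nlinarith [Real.exp_one_lt_d9]

section Quasihyperbolic

variable {F : Type*} [NormedAddCommGroup F] {D : Set F}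

theorem distBd_nonneg {z : F} : 0 ≤ distBd D z :=
  infDist_nonneg

variable [NormedSpace ℝ F]

theorem distBd_pos (hD : IsOpen D) (hne : D ≠ univ) {z : F} (hz : z ∈ D) : 0 < distBd D z := by
  refine (isClosed_frontier.notMem_iff_infDist_pos (nonempty_frontier_iff.2 ⟨⟨z, hz⟩, hne⟩)).1 ?_
  rw [hD.frontier_eq]
  exact fun h => h.2 hz

theorem ball_distBd_subset {z : F} (hz : z ∈ D) : ball z (distBd D z) ⊆ D := by
  intro y hy
  by_contra hyD
  obtain ⟨w, hw, hwD⟩ := (convex_segment z y).isPreconnected.inter_frontier_nonempty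
    ⟨z, left_mem_segment ℝ z y, hz⟩ ⟨y, right_mem_segment ℝ z y, hyD⟩
  have hzw : dist z w ≤ dist z y := by
    rw [← dist_add_dist_of_mem_segment hw]
    exact le_add_of_nonneg_right dist_nonneg
  exact (infDist_le_dist_of_mem hwD).not_gt (hzw.trans_lt (mem_ball'.1 hy))

/-- Being constant on `(-∞, 0]` and on `[1, ∞)` is what lets such paths be concatenated into
`C¹` paths. -/
def C1JoinedIn (D : Set F) (x y : F) : Prop :=
  ∃ γ : ℝ → F, ContDiff ℝ 1 γ ∧ (∀ t ≤ 0, γ t = x) ∧ (∀ t, 1 ≤ t → γ t = y) ∧ ∀ t, γ t ∈ D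

theorem C1JoinedIn.of_segment_subset {x y : F} (h : segment ℝ x y ⊆ D) : C1JoinedIn D x y := by
  refine ⟨fun t => x + Real.smoothTransition t • (y - x),
    contDiff_const.add (Real.smoothTransition.contDiff.smul contDiff_const),
    fun t ht => by simp [Real.smoothTransition.zero_of_nonpos ht],
    fun t ht => by simp [Real.smoothTransition.one_of_one_le ht], fun t => h ?_⟩
  rw [segment_eq_image']
  exact ⟨_, ⟨Real.smoothTransition.nonneg t, Real.smoothTransition.le_one t⟩, rfl⟩

theorem C1JoinedIn.trans {x y z : F} (hxy : C1JoinedIn D x y) (hyz : C1JoinedIn D y z) :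
    C1JoinedIn D x z := by
  obtain ⟨γ₁, hγ₁, hγ₁x, hγ₁y, hγ₁D⟩ := hxy
  obtain ⟨γ₂, hγ₂, hγ₂y, hγ₂z, hγ₂D⟩ := hyz
  have hleft : ∀ t ≤ 1 / 2, γ₁ (2 * t) + γ₂ (2 * t - 1) - y = γ₁ (2 * t) := fun t ht => by
    rw [hγ₂y _ (by linarith), add_sub_cancel_right]
  have hright : ∀ t, 1 / 2 ≤ t → γ₁ (2 * t) + γ₂ (2 * t - 1) - y = γ₂ (2 * t - 1) := fun t ht => by
    rw [hγ₁y _ (by linarith), add_sub_cancel_left]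
  refine ⟨fun t => γ₁ (2 * t) + γ₂ (2 * t - 1) - y, ?_, fun t ht => ?_, fun t ht => ?_, fun t => ?_⟩
  · exact ((hγ₁.comp (contDiff_const.mul contDiff_id)).add
      (hγ₂.comp ((contDiff_const.mul contDiff_id).sub contDiff_const))).sub contDiff_const
  · exact (hleft t (by linarith)).trans (hγ₁x _ (by linarith))
  · exact (hright t (by linarith)).trans (hγ₂z _ (by linarith))
  · rcases le_total t (1 / 2) with ht | ht
    · simp only [hleft t ht, hγ₁D]
    · simp only [hright t ht, hγ₂D]

theorem IsOpen.c1JoinedIn_of_isPreconnected (hD : IsOpen D) (hDc : IsPreconnected D) {x y : F}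
    (hx : x ∈ D) (hy : y ∈ D) : C1JoinedIn D x y := by
  refine hDc.induction₂' (C1JoinedIn D) (fun z hz => ?_) (fun _ _ _ _ _ _ => C1JoinedIn.trans) hx hy
  obtain ⟨r, hr, hball⟩ := Metric.isOpen_iff.1 hD z hz
  filter_upwards [nhdsWithin_le_nhds (ball_mem_nhds z hr)] with w hw
  exact ⟨.of_segment_subset ((convex_ball z r).segment_subset (mem_ball_self hr) hw |>.trans hball),
    .of_segment_subset ((convex_ball z r).segment_subset hw (mem_ball_self hr) |>.trans hball)⟩

theorem C1JoinedIn.exists_isQHPath {x y : F} (h : C1JoinedIn D x y) : ∃ γ, IsQHPath D x y γ := by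
  obtain ⟨γ, hγ, hγx, hγy, hγD⟩ := h
  exact ⟨γ, hγ.contDiffOn, hγx 0 le_rfl, hγy 1 le_rfl, fun t _ => hγD t⟩

theorem log_one_add_dist_div_distBd_le_qhLength (hD : IsOpen D) (hne : D ≠ univ) {x y : F}
    {γ : ℝ → F} (hγ : IsQHPath D x y γ) :
    Real.log (1 + dist x y / distBd D x) ≤ qhLength D γ := by
  obtain ⟨hC1, rfl, rfl, hmem⟩ := hγ
  have h01 : (0 : ℝ) ≤ 1 := zero_le_one
  have hd₀ : 0 < distBd D (γ 0) := distBd_pos hD hne (hmem 0 (left_mem_Icc.2 h01))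
  have hchord : ∀ t ∈ Icc (0 : ℝ) 1,
      dist (γ t) (γ 0) ≤ ∫ u in 0..t, ‖derivWithin γ (Icc 0 1) u‖ := fun t ht => by
    rw [dist_eq_norm]
    exact norm_sub_le_integral_norm_derivWithin h01 hC1 ht
  have hlog := log_add_integral_sub_log_le_integral_div h01 hd₀
    (hC1.continuousOn_derivWithin (uniqueDiffOn_Icc zero_lt_one) le_rfl).norm
    (fun _ _ => norm_nonneg _) ((continuous_infDist_pt _).comp_continuousOn hC1.continuousOn)
    (fun t ht => distBd_pos hD hne (hmem t ht))
    fun t ht => calc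
      distBd D (γ t) ≤ distBd D (γ 0) + dist (γ t) (γ 0) := infDist_le_infDist_add_dist
      _ ≤ _ := by gcongr; exact hchord t ht
  calc Real.log (1 + dist (γ 0) (γ 1) / distBd D (γ 0))
      = Real.log (distBd D (γ 0) + dist (γ 1) (γ 0)) - Real.log (distBd D (γ 0)) := by
        rw [← Real.log_div (by positivity) hd₀.ne', add_div, div_self hd₀.ne', dist_comm]
    _ ≤ _ := by gcongr; exact hchord 1 (right_mem_Icc.2 h01)
    _ ≤ qhLength D γ := hlog

theorem qhLength_nonneg (D : Set F) (γ : ℝ → F) : 0 ≤ qhLength D γ :=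
  intervalIntegral.integral_nonneg zero_le_one fun _ _ => div_nonneg (norm_nonneg _) distBd_nonneg

theorem qhDist_le_qhLength {x y : F} {γ : ℝ → F} (hγ : IsQHPath D x y γ) :
    qhDist D x y ≤ qhLength D γ :=
  csInf_le ⟨0, fun _ ⟨γ, _, hl⟩ => hl ▸ qhLength_nonneg D γ⟩ ⟨γ, hγ, rfl⟩

theorem log_one_add_dist_div_distBd_le_qhDist (hD : IsOpen D) (hDc : IsPreconnected D)
    (hne : D ≠ univ) {x y : F} (hx : x ∈ D) (hy : y ∈ D) :
    Real.log (1 + dist x y / distBd D x) ≤ qhDist D x y := by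
  obtain ⟨γ, hγ⟩ := (hD.c1JoinedIn_of_isPreconnected hDc hx hy).exists_isQHPath
  exact le_csInf ⟨_, γ, hγ, rfl⟩ fun _ ⟨γ, hγ, hl⟩ =>
    hl ▸ log_one_add_dist_div_distBd_le_qhLength hD hne hγ

theorem dist_le_two_mul_qhDist_mul_distBd (hD : IsOpen D) (hDc : IsPreconnected D)
    (hne : D ≠ univ) {x y : F} (hx : x ∈ D) (hy : y ∈ D) (hk : qhDist D x y ≤ 1) :
    dist x y ≤ 2 * qhDist D x y * distBd D x := by
  have hd := distBd_pos hD hne hx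
  have hlog := log_one_add_dist_div_distBd_le_qhDist hD hDc hne hx hy
  have hk₀ : 0 ≤ qhDist D x y := (Real.log_nonneg (by
    have := div_nonneg (dist_nonneg (x := x) (y := y)) hd.le; linarith)).trans hlog
  have hexp : 1 + dist x y / distBd D x ≤ 1 + 2 * qhDist D x y :=
    ((Real.log_le_iff_le_exp (by positivity)).1 hlog).trans (exp_le_one_add_two_mul hk₀ hk)
  rw [add_le_add_iff_left, div_le_iff₀ hd] at hexp
  exact hexp

theorem qhDist_le_two_mul_dist_div_distBd (hD : IsOpen D) (hne : D ≠ univ) {z₁ z₂ : F}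
    (hz₁ : z₁ ∈ D) (h : 2 * dist z₁ z₂ ≤ distBd D z₁) :
    qhDist D z₁ z₂ ≤ 2 * dist z₁ z₂ / distBd D z₁ := by
  have hd := distBd_pos hD hne hz₁
  set γ : ℝ → F := fun t => z₁ + t • (z₂ - z₁)
  have hγz₁ : ∀ t ∈ Icc (0 : ℝ) 1, dist (γ t) z₁ ≤ dist z₁ z₂ := fun t ht => by
    rw [dist_eq_norm, add_sub_cancel_left, norm_smul, Real.norm_of_nonneg ht.1, dist_comm,
      dist_eq_norm]
    exact mul_le_of_le_one_left (norm_nonneg _) ht.2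
  have hγd : ∀ t ∈ Icc (0 : ℝ) 1, distBd D z₁ / 2 ≤ distBd D (γ t) := fun t ht => by
    have : distBd D z₁ ≤ distBd D (γ t) + dist z₁ (γ t) := infDist_le_infDist_add_dist
    linarith [hγz₁ t ht, dist_comm z₁ (γ t)]
  have hγ' : ∀ t ∈ Icc (0 : ℝ) 1, derivWithin γ (Icc 0 1) t = z₂ - z₁ := fun t ht => by
    have := ((hasDerivAt_id t).smul_const (z₂ - z₁)).const_add z₁
    rw [one_smul] at this
    exact this.hasDerivWithinAt.derivWithin (uniqueDiffOn_Icc zero_lt_one t ht)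
  have hpath : IsQHPath D z₁ z₂ γ :=
    ⟨(contDiff_const.add (contDiff_id.smul contDiff_const)).contDiffOn, by simp [γ], by simp [γ],
      fun t ht => ball_distBd_subset hz₁ (mem_ball.2 ((hγz₁ t ht).trans_lt (by linarith)))⟩
  refine (qhDist_le_qhLength hpath).trans ((le_abs_self _).trans ?_)
  have hbound := intervalIntegral.norm_integral_le_of_norm_le_const
    (a := 0) (b := 1) (C := 2 * dist z₁ z₂ / distBd D z₁)
    (f := fun t => ‖derivWithin γ (Icc 0 1) t‖ / distBd D (γ t)) fun t ht => by
      rw [uIoc_of_le zero_le_one] at ht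
      have ht' := Ioc_subset_Icc_self ht
      rw [hγ' t ht', norm_div, norm_norm, Real.norm_of_nonneg distBd_nonneg, ← dist_eq_norm',
        div_le_div_iff₀ (by linarith [hγd t ht']) hd]
      nlinarith [hγd t ht', dist_nonneg (x := z₁) (y := z₂)]
  simpa [qhLength] using hbound

end Quasihyperbolic

theorem qh_upper_lipschitz_general {E' : Type*} [NormedAddCommGroup E'] [NormedSpace ℝ E']
    (D : Set E) (D' : Set E')
    (hD : IsOpen D) (hDne : D ≠ univ)
    (hD' : IsOpen D') (hDc' : IsConnected D') (hDne' : D' ≠ univ)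
    (f : E → E') (hbij : Set.BijOn f D D')
    (M M1 : ℝ) (hM : 1 ≤ M)
    (hqh : ∀ x ∈ D, ∀ y ∈ D, qhDist D' (f x) (f y) ≤ M * qhDist D x y)
    (hd : ∀ z ∈ D, distBd D' (f z) ≤ M1 * distBd D z) :
    ∀ z1 ∈ D, ∀ z2 ∈ D, dist z1 z2 ≤ distBd D z1 / (2 * M) →
      dist (f z1) (f z2) ≤ 4 * M * M1 * dist z1 z2 := by
  intro z1 hz1 z2 hz2 hdist
  have hd₁ := distBd_pos hD hDne hz1
  have hr : 2 * M * dist z1 z2 ≤ distBd D z1 := by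
    rw [le_div_iff₀ (by positivity)] at hdist
    linarith
  have hk : qhDist D z1 z2 ≤ 2 * dist z1 z2 / distBd D z1 :=
    qhDist_le_two_mul_dist_div_distBd hD hDne hz1 (by nlinarith [dist_nonneg (x := z1) (y := z2)])
  have hk' : qhDist D' (f z1) (f z2) ≤ 2 * M * dist z1 z2 / distBd D z1 := by
    calc qhDist D' (f z1) (f z2) ≤ M * qhDist D z1 z2 := hqh z1 hz1 z2 hz2
      _ ≤ M * (2 * dist z1 z2 / distBd D z1) := by gcongr
      _ = 2 * M * dist z1 z2 / distBd D z1 := by ring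
  have hk'₁ : qhDist D' (f z1) (f z2) ≤ 1 := hk'.trans ((div_le_one hd₁).2 hr)
  calc dist (f z1) (f z2)
      ≤ 2 * qhDist D' (f z1) (f z2) * distBd D' (f z1) :=
        dist_le_two_mul_qhDist_mul_distBd hD' hDc'.isPreconnected hDne' (hbij.mapsTo hz1)
          (hbij.mapsTo hz2) hk'₁
    _ ≤ 2 * (2 * M * dist z1 z2 / distBd D z1) * (M1 * distBd D z1) := by
        gcongr
        exacts [distBd_nonneg, hd z1 hz1]
    _ = 4 * M * M1 * dist z1 z2 := by field_simp; ring

/-- If `f : D → D'` is a homeomorphism with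
`k_{D'}(f x, f y) ≤ M·k_D(x,y)` and `d_{D'}(f z) ≤ M1·d_D(z)`, then for points with
`|z1-z2| ≤ d_D(z1)/(2M)` one has `|f z1 - f z2| ≤ 4·M·M1·|z1-z2|`. -/
theorem qh_upper_lipschitz {E' : Type*} [NormedAddCommGroup E'] [NormedSpace ℝ E']
    [CompleteSpace E'] (D : Set E) (D' : Set E')
    (hD : IsOpen D) (hDc : IsConnected D) (hDne : D ≠ univ)
    (hD' : IsOpen D') (hDc' : IsConnected D') (hDne' : D' ≠ univ)
    (f : E → E') (hbij : Set.BijOn f D D') (hcont : ContinuousOn f D)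
    (M M1 : ℝ) (hM : 1 ≤ M) (hM1 : 1 ≤ M1)
    (hqh : ∀ x ∈ D, ∀ y ∈ D, qhDist D' (f x) (f y) ≤ M * qhDist D x y)
    (hd : ∀ z ∈ D, distBd D' (f z) ≤ M1 * distBd D z) :
    ∀ z1 ∈ D, ∀ z2 ∈ D, dist z1 z2 ≤ distBd D z1 / (2 * M) →
      dist (f z1) (f z2) ≤ 4 * M * M1 * dist z1 z2 :=
  qh_upper_lipschitz_general D D' hD hDne hD' hDc' hDne' f hbij M M1 hM hqh hd
end
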